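/- arXiv:0802.0585 — 4 statements merged into one kernel-verified Lean document; each statement's English description precedes it below -/
import Mathlib

section
/- There exists a constant C₁ > 0 such that for all u ∈ V and v ∈ H, the sequence B(u, v) belongs to H and |B(u, v)| ≤ C₁ ‖u‖ |v|. -/
open Complex MeasureTheory Filter Topology

noncomputable section

/-- The wave numbers `kₙ = k₀ · 2ⁿ`. -/
def kk (k₀ : ℝ) (n : ℕ) : ℝ := k₀ * 2 ^ n

/-- The GOY nonlinearity `B(u,v)ₙ`; sequences are indexed from `1`, with the
convention that the `0`-th entry (playing the role of `u₀ = u₋₁ = 0`) vanishes. -/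
def goyB (k₀ : ℝ) (u v : ℕ → ℂ) (n : ℕ) : ℂ :=
  if n = 0 then 0 else
    Complex.I * (kk k₀ n : ℂ) *
      ((1 / 4) * (starRingEnd ℂ) (u (n + 1)) * (starRingEnd ℂ) (v (n - 1))
        - (1 / 2) * ((starRingEnd ℂ) (u (n + 1)) * (starRingEnd ℂ) (v (n + 2))
            + (starRingEnd ℂ) (u (n + 2)) * (starRingEnd ℂ) (v (n + 1)))
        + (1 / 8) * (starRingEnd ℂ) (u (n - 1)) * (starRingEnd ℂ) (v (n - 2)))

/-- Membership in `H`: square summability. -/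
def memH (u : ℕ → ℂ) : Prop := Summable fun n => ‖u n‖ ^ 2

/-- Membership in `V`. -/
def memV (k₀ : ℝ) (u : ℕ → ℂ) : Prop := Summable fun n => kk k₀ n ^ 2 * ‖u n‖ ^ 2

/-- `|u|² = ∑ₙ |uₙ|²`. -/
def hnormSq (u : ℕ → ℂ) : ℝ := ∑' n, ‖u n‖ ^ 2

/-- `‖u‖² = ∑ₙ kₙ²|uₙ|²`. -/
def vnormSq (k₀ : ℝ) (u : ℕ → ℂ) : ℝ := ∑' n, kk k₀ n ^ 2 * ‖u n‖ ^ 2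

/-- `‖u‖_{V'}² = ∑ₙ kₙ⁻²|uₙ|²`. -/
def vdualSq (k₀ : ℝ) (u : ℕ → ℂ) : ℝ := ∑' n, ‖u n‖ ^ 2 / kk k₀ n ^ 2

end

/-! For `n ≥ 1` every product in `Bₙ(u, v)` pairs a coefficient of `v` with a coefficient `uₘ`
of a neighbouring shell `m ∈ {n - 1, n + 1, n + 2}`, and `|kₙ| ≤ 2 |kₘ|` there, so
`|kₙ| |uₘ| ≤ 2 ‖u‖` by a single term of the `V`-norm. Hence `|Bₙ(u, v)|` is at most `‖u‖` times
a sum of four shifted coefficients of `v`, and each shifted sequence has `H`-norm at most `|v|`. -/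

section ShiftedSums

variable {G : Type*} [AddCommGroup G] [TopologicalSpace G] [IsTopologicalAddGroup G] {f : ℕ → G}

theorem Summable.comp_tsub (hf : Summable f) (k : ℕ) : Summable fun n => f (n - k) :=
  (summable_nat_add_iff k).mp (by simpa using hf)

theorem Summable.tsum_comp_tsub [T2Space G] (hf : Summable f) (hf0 : f 0 = 0) (k : ℕ) :
    ∑' n, f (n - k) = ∑' n, f n := by
  -- `n - k` truncates at `0`, so the first `k` terms are all `f 0`.
  rw [← (hf.comp_tsub k).sum_add_tsum_nat_add k,
    Finset.sum_eq_zero fun i hi => by rw [Nat.sub_eq_zero_of_le (Finset.mem_range.mp hi).le, hf0],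
    zero_add]
  simp only [Nat.add_sub_cancel]

end ShiftedSums

theorem kk_succ (k₀ : ℝ) (n : ℕ) : kk k₀ (n + 1) = 2 * kk k₀ n := by
  unfold kk; ring

theorem abs_kk_le_abs_kk {k₀ : ℝ} {m n : ℕ} (h : m ≤ n) : |kk k₀ m| ≤ |kk k₀ n| := by
  simp only [kk, abs_mul, abs_pow, abs_two]
  gcongr
  norm_num

theorem abs_kk_mul_norm_le_sqrt_vnormSq {k₀ : ℝ} {u : ℕ → ℂ} (hu : memV k₀ u) (n : ℕ) :
    |kk k₀ n| * ‖u n‖ ≤ √(vnormSq k₀ u) := by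
  apply Real.le_sqrt_of_sq_le
  rw [mul_pow, sq_abs]
  exact hu.le_tsum n fun _ _ => by positivity

theorem norm_goyB_le_of_ne_zero (k₀ : ℝ) (u v : ℕ → ℂ) {n : ℕ} (hn : n ≠ 0) :
    ‖goyB k₀ u v n‖ ≤ |kk k₀ n| * ((1 / 4) * ‖u (n + 1)‖ * ‖v (n - 1)‖
      + (1 / 2) * (‖u (n + 1)‖ * ‖v (n + 2)‖ + ‖u (n + 2)‖ * ‖v (n + 1)‖)
      + (1 / 8) * ‖u (n - 1)‖ * ‖v (n - 2)‖) := by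
  rw [goyB, if_neg hn, norm_mul, norm_mul, Complex.norm_I, one_mul, Complex.norm_real,
    Real.norm_eq_abs]
  gcongr
  refine (norm_add_le _ _).trans (add_le_add ((norm_sub_le _ _).trans (add_le_add ?_ ?_)) ?_)
  · simp
  · simpa using norm_add_le_of_le (by simp) (by simp)
  · simp

theorem norm_goyB_le {k₀ : ℝ} {u : ℕ → ℂ} (hu : memV k₀ u) (v : ℕ → ℂ) (n : ℕ) :
    ‖goyB k₀ u v n‖ ≤
      √(vnormSq k₀ u) * (‖v (n - 1)‖ + ‖v (n + 1)‖ + ‖v (n + 2)‖ + ‖v (n - 2)‖) := by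
  rcases eq_or_ne n 0 with rfl | hn
  · rw [goyB, if_pos rfl, norm_zero]
    positivity
  have hu₁ : |kk k₀ n| * ‖u (n + 1)‖ ≤ √(vnormSq k₀ u) :=
    (mul_le_mul_of_nonneg_right (abs_kk_le_abs_kk (by omega)) (norm_nonneg _)).trans
      (abs_kk_mul_norm_le_sqrt_vnormSq hu _)
  have hu₂ : |kk k₀ n| * ‖u (n + 2)‖ ≤ √(vnormSq k₀ u) :=
    (mul_le_mul_of_nonneg_right (abs_kk_le_abs_kk (by omega)) (norm_nonneg _)).trans
      (abs_kk_mul_norm_le_sqrt_vnormSq hu _)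
  have hu₃ : |kk k₀ n| * ‖u (n - 1)‖ ≤ 2 * √(vnormSq k₀ u) := by
    obtain ⟨m, rfl⟩ := Nat.exists_eq_add_one_of_ne_zero hn
    rw [kk_succ, abs_mul, abs_two, Nat.add_sub_cancel, mul_assoc]
    exact mul_le_mul_of_nonneg_left (abs_kk_mul_norm_le_sqrt_vnormSq hu m) zero_le_two
  refine (norm_goyB_le_of_ne_zero k₀ u v hn).trans ?_
  have := Real.sqrt_nonneg (vnormSq k₀ u)
  nlinarith [mul_le_mul_of_nonneg_right hu₁ (norm_nonneg (v (n - 1))),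
    mul_le_mul_of_nonneg_right hu₁ (norm_nonneg (v (n + 2))),
    mul_le_mul_of_nonneg_right hu₂ (norm_nonneg (v (n + 1))),
    mul_le_mul_of_nonneg_right hu₃ (norm_nonneg (v (n - 2))),
    mul_nonneg this (norm_nonneg (v (n - 1))), mul_nonneg this (norm_nonneg (v (n + 1))),
    mul_nonneg this (norm_nonneg (v (n + 2))), mul_nonneg this (norm_nonneg (v (n - 2)))]

theorem add_add_add_sq_le (a b c d : ℝ) :
    (a + b + c + d) ^ 2 ≤ 4 * (a ^ 2 + b ^ 2 + c ^ 2 + d ^ 2) := by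
  nlinarith [sq_nonneg (a - b), sq_nonneg (a - c), sq_nonneg (a - d), sq_nonneg (b - c),
    sq_nonneg (b - d), sq_nonneg (c - d)]

theorem vnormSq_nonneg (k₀ : ℝ) (u : ℕ → ℂ) : 0 ≤ vnormSq k₀ u :=
  tsum_nonneg fun _ => by positivity

theorem sq_norm_goyB_le {k₀ : ℝ} {u : ℕ → ℂ} (hu : memV k₀ u) (v : ℕ → ℂ) (n : ℕ) :
    ‖goyB k₀ u v n‖ ^ 2 ≤ 4 * vnormSq k₀ u *
      (‖v (n - 1)‖ ^ 2 + ‖v (n + 1)‖ ^ 2 + ‖v (n + 2)‖ ^ 2 + ‖v (n - 2)‖ ^ 2) :=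
  calc ‖goyB k₀ u v n‖ ^ 2
      ≤ (√(vnormSq k₀ u) * (‖v (n - 1)‖ + ‖v (n + 1)‖ + ‖v (n + 2)‖ + ‖v (n - 2)‖)) ^ 2 :=
        pow_le_pow_left₀ (norm_nonneg _) (norm_goyB_le hu v n) 2
    _ ≤ √(vnormSq k₀ u) ^ 2 *
        (4 * (‖v (n - 1)‖ ^ 2 + ‖v (n + 1)‖ ^ 2 + ‖v (n + 2)‖ ^ 2 + ‖v (n - 2)‖ ^ 2)) := by
        rw [mul_pow]
        gcongr
        exact add_add_add_sq_le _ _ _ _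
    _ = _ := by rw [Real.sq_sqrt (vnormSq_nonneg k₀ u)]; ring

theorem summable_shifts {f : ℕ → ℝ} (hf : Summable f) :
    Summable fun n => f (n - 1) + f (n + 1) + f (n + 2) + f (n - 2) :=
  (((hf.comp_tsub 1).add ((summable_nat_add_iff 1).mpr hf)).add
    ((summable_nat_add_iff 2).mpr hf)).add (hf.comp_tsub 2)

theorem tsum_shifts_le {f : ℕ → ℝ} (hf : Summable f) (hf_nonneg : ∀ n, 0 ≤ f n) (hf0 : f 0 = 0) :
    ∑' n, (f (n - 1) + f (n + 1) + f (n + 2) + f (n - 2)) ≤ 4 * ∑' n, f n := by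
  have hadd (k : ℕ) : ∑' n, f (n + k) ≤ ∑' n, f n :=
    tsum_comp_le_tsum_of_inj hf hf_nonneg (add_left_injective k)
  have h₁ := hf.comp_tsub 1
  have h₂ := (summable_nat_add_iff 1).mpr hf
  have h₃ := (summable_nat_add_iff 2).mpr hf
  rw [((h₁.add h₂).add h₃).tsum_add (hf.comp_tsub 2), (h₁.add h₂).tsum_add h₃, h₁.tsum_add h₂,
    hf.tsum_comp_tsub hf0, hf.tsum_comp_tsub hf0]
  linarith [hadd 1, hadd 2]

theorem memH_goyB {k₀ : ℝ} {u v : ℕ → ℂ} (hu : memV k₀ u) (hv : memH v) :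
    memH (goyB k₀ u v) :=
  ((summable_shifts hv).mul_left _).of_nonneg_of_le (fun _ => by positivity) (sq_norm_goyB_le hu v)

theorem hnormSq_goyB_le {k₀ : ℝ} {u v : ℕ → ℂ} (hu : memV k₀ u) (hv : memH v) (hv0 : v 0 = 0) :
    hnormSq (goyB k₀ u v) ≤ 16 * vnormSq k₀ u * hnormSq v :=
  calc hnormSq (goyB k₀ u v)
      ≤ ∑' n, 4 * vnormSq k₀ u *
          (‖v (n - 1)‖ ^ 2 + ‖v (n + 1)‖ ^ 2 + ‖v (n + 2)‖ ^ 2 + ‖v (n - 2)‖ ^ 2) :=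
        (memH_goyB hu hv).tsum_le_tsum (sq_norm_goyB_le hu v) ((summable_shifts hv).mul_left _)
    _ ≤ 4 * vnormSq k₀ u * (4 * hnormSq v) := by
        rw [tsum_mul_left]
        gcongr
        · exact mul_nonneg zero_le_four (vnormSq_nonneg k₀ u)
        · exact tsum_shifts_le hv (fun _ => by positivity) (by simp [hv0])
    _ = 16 * vnormSq k₀ u * hnormSq v := by ring

theorem stmt_2_general (k₀ : ℝ) :
    ∃ C₁ : ℝ, 0 < C₁ ∧ ∀ u v : ℕ → ℂ, u 0 = 0 → v 0 = 0 → memV k₀ u → memH v →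
      memH (goyB k₀ u v) ∧
      Real.sqrt (hnormSq (goyB k₀ u v)) ≤
        C₁ * Real.sqrt (vnormSq k₀ u) * Real.sqrt (hnormSq v) := by
  refine ⟨4, four_pos, fun u v _ hv0 hu hv => ⟨memH_goyB hu hv, ?_⟩⟩
  calc √(hnormSq (goyB k₀ u v))
      ≤ √(16 * vnormSq k₀ u * hnormSq v) := Real.sqrt_le_sqrt (hnormSq_goyB_le hu hv hv0)
    _ = 4 * √(vnormSq k₀ u) * √(hnormSq v) := by
        rw [Real.sqrt_mul (mul_nonneg (by norm_num) (vnormSq_nonneg k₀ u)),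
          Real.sqrt_mul (by norm_num), show (16 : ℝ) = 4 ^ 2 by norm_num, Real.sqrt_sq zero_le_four]

/-- `|B(u,v)| ≤ C₁ ‖u‖ |v|` for `u ∈ V`, `v ∈ H`. -/
theorem stmt_2 (k₀ : ℝ) (hk₀ : 0 < k₀) :
    ∃ C₁ : ℝ, 0 < C₁ ∧ ∀ u v : ℕ → ℂ, u 0 = 0 → v 0 = 0 → memV k₀ u → memH v →
      memH (goyB k₀ u v) ∧
      Real.sqrt (hnormSq (goyB k₀ u v)) ≤
        C₁ * Real.sqrt (vnormSq k₀ u) * Real.sqrt (hnormSq v) :=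
  stmt_2_general k₀
end

section
/- There exists a constant C₃ > 0 such that for all u, v ∈ H, one has ‖B(u, v)‖_{V'} = (∑ₙ kₙ⁻²|Bₙ(u, v)|²)^{1/2} ≤ C₃ |u| |v|. -/
open Complex MeasureTheory Filter Topology

/-!
Since `|uₖ| ≤ |u|` for every `k`, each component obeys
`|Bₙ(u, v)| / kₙ ≤ |u| (|vₙ₋₁|/4 + |vₙ₊₂|/2 + |vₙ₊₁|/2 + |vₙ₋₂|/8)`.
Cauchy–Schwarz with the weights `1/4, 1/2, 1/2, 1/8` (of total mass `11/8`) bounds the square of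
the bracket by `11/8` times the same weighted combination of the `|vₘ|²`; summing over `n`, each
shift of `(|vₘ|²)` has sum at most `|v|²`, so `‖B(u, v)‖_{V'} ≤ (11/8) |u| |v|`.
-/

noncomputable def goyMajorant (x : ℕ → ℝ) (n : ℕ) : ℝ :=
  x (n - 1) / 4 + x (n + 2) / 2 + x (n + 1) / 2 + x (n - 2) / 8

lemma goyMajorant_nonneg {x : ℕ → ℝ} (hx : ∀ m, 0 ≤ x m) (n : ℕ) : 0 ≤ goyMajorant x n := by
  unfold goyMajorant
  have := hx (n - 1); have := hx (n + 2); have := hx (n + 1); have := hx (n - 2)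
  positivity

lemma goyMajorant_sq_le (x : ℕ → ℝ) (n : ℕ) :
    goyMajorant x n ^ 2 ≤ 11 / 8 * goyMajorant (fun m => x m ^ 2) n := by
  unfold goyMajorant
  nlinarith [sq_nonneg (x (n - 1) - x (n + 2)), sq_nonneg (x (n - 1) - x (n + 1)),
    sq_nonneg (x (n - 1) - x (n - 2)), sq_nonneg (x (n + 2) - x (n + 1)),
    sq_nonneg (x (n + 2) - x (n - 2)), sq_nonneg (x (n + 1) - x (n - 2))]

lemma summable_comp_sub {x : ℕ → ℝ} (hx : Summable x) (k : ℕ) :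
    Summable fun n => x (n - k) :=
  (summable_nat_add_iff k).mp (by simpa using hx)

/-- Truncated subtraction repeats `x 0` in the first `k` terms. -/
lemma tsum_comp_sub {x : ℕ → ℝ} (hx : Summable x) (k : ℕ) :
    ∑' n, x (n - k) = k * x 0 + ∑' n, x n := by
  rw [← (summable_comp_sub hx k).sum_add_tsum_nat_add k]
  simp [Finset.sum_congr rfl fun i (hi : i ∈ Finset.range k) =>
    congrArg x (Nat.sub_eq_zero_of_le (Finset.mem_range.mp hi).le)]

lemma tsum_comp_add_le {x : ℕ → ℝ} (hx : Summable x) (hx₀ : ∀ m, 0 ≤ x m) (k : ℕ) :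
    ∑' n, x (n + k) ≤ ∑' n, x n :=
  tsum_comp_le_tsum_of_inj hx hx₀ (add_left_injective k)

lemma summable_goyMajorant {x : ℕ → ℝ} (hx : Summable x) : Summable (goyMajorant x) :=
  ((((summable_comp_sub hx 1).div_const 4).add (((summable_nat_add_iff 2).mpr hx).div_const 2)).add
    (((summable_nat_add_iff 1).mpr hx).div_const 2)).add ((summable_comp_sub hx 2).div_const 8)

lemma tsum_goyMajorant_le {x : ℕ → ℝ} (hx : Summable x) (hx₀ : ∀ m, 0 ≤ x m) (hx_zero : x 0 = 0) :
    ∑' n, goyMajorant x n ≤ 11 / 8 * ∑' n, x n := by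
  have h1 := summable_comp_sub hx 1
  have h2 := summable_comp_sub hx 2
  have h3 : Summable fun n => x (n + 2) := (summable_nat_add_iff 2).mpr hx
  have h4 : Summable fun n => x (n + 1) := (summable_nat_add_iff 1).mpr hx
  unfold goyMajorant
  rw [Summable.tsum_add (((h1.div_const _).add (h3.div_const _)).add (h4.div_const _))
      (h2.div_const _), Summable.tsum_add ((h1.div_const _).add (h3.div_const _)) (h4.div_const _),
    Summable.tsum_add (h1.div_const _) (h3.div_const _), tsum_div_const, tsum_div_const,
    tsum_div_const, tsum_div_const, tsum_comp_sub hx, tsum_comp_sub hx, hx_zero]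
  linarith [tsum_comp_add_le hx hx₀ 1, tsum_comp_add_le hx hx₀ 2]

lemma norm_le_sqrt_hnormSq {u : ℕ → ℂ} (hu : memH u) (k : ℕ) : ‖u k‖ ≤ √(hnormSq u) :=
  Real.le_sqrt_of_sq_le (hu.le_tsum k fun _ _ => sq_nonneg _)

lemma norm_goyB_le_s4 (k₀ : ℝ) {u v : ℕ → ℂ} {A : ℝ} (hA : ∀ k, ‖u k‖ ≤ A) (n : ℕ) :
    ‖goyB k₀ u v n‖ ≤ |kk k₀ n| * (A * goyMajorant (fun m => ‖v m‖) n) := by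
  have hA₀ : 0 ≤ A := (norm_nonneg _).trans (hA 0)
  have hmaj := goyMajorant_nonneg (fun m => norm_nonneg (v m)) n
  unfold goyB
  split_ifs
  · rw [norm_zero]; positivity
  rw [norm_mul, norm_mul, norm_I, one_mul, norm_real, Real.norm_eq_abs]
  gcongr
  calc _ ≤ 1 / 4 * ‖u (n + 1)‖ * ‖v (n - 1)‖
          + 1 / 2 * (‖u (n + 1)‖ * ‖v (n + 2)‖ + ‖u (n + 2)‖ * ‖v (n + 1)‖)
          + 1 / 8 * ‖u (n - 1)‖ * ‖v (n - 2)‖ := by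
        refine (norm_add_le _ _).trans (add_le_add ((norm_sub_le _ _).trans (add_le_add ?_ ?_)) ?_)
        · simp
        · rw [norm_mul]
          gcongr
          · norm_num
          · exact (norm_add_le _ _).trans_eq (by simp)
        · simp
    _ ≤ 1 / 4 * A * ‖v (n - 1)‖ + 1 / 2 * (A * ‖v (n + 2)‖ + A * ‖v (n + 1)‖)
          + 1 / 8 * A * ‖v (n - 2)‖ := by gcongr <;> apply hA
    _ = A * goyMajorant (fun m => ‖v m‖) n := by unfold goyMajorant; ring

lemma norm_goyB_sq_div_le (k₀ : ℝ) {u v : ℕ → ℂ} {A : ℝ} (hA : ∀ k, ‖u k‖ ≤ A) (n : ℕ) :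
    ‖goyB k₀ u v n‖ ^ 2 / kk k₀ n ^ 2 ≤ A ^ 2 * (11 / 8 * goyMajorant (fun m => ‖v m‖ ^ 2) n) := by
  have hmaj := goyMajorant_nonneg (fun m => sq_nonneg ‖v m‖) n
  refine div_le_of_le_mul₀ (sq_nonneg _) (by positivity) ?_
  calc ‖goyB k₀ u v n‖ ^ 2 ≤ (|kk k₀ n| * (A * goyMajorant (fun m => ‖v m‖) n)) ^ 2 := by
        gcongr; exact norm_goyB_le_s4 k₀ hA n
    _ = A ^ 2 * goyMajorant (fun m => ‖v m‖) n ^ 2 * kk k₀ n ^ 2 := by rw [mul_pow, sq_abs]; ring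
    _ ≤ A ^ 2 * (11 / 8 * goyMajorant (fun m => ‖v m‖ ^ 2) n) * kk k₀ n ^ 2 := by
        gcongr; exact goyMajorant_sq_le _ n

theorem stmt_4_general (k₀ : ℝ) :
    ∃ C₃ : ℝ, 0 < C₃ ∧ ∀ u v : ℕ → ℂ, u 0 = 0 → v 0 = 0 → memH u → memH v →
      Summable (fun n => ‖goyB k₀ u v n‖ ^ 2 / kk k₀ n ^ 2) ∧
      Real.sqrt (∑' n, ‖goyB k₀ u v n‖ ^ 2 / kk k₀ n ^ 2) ≤
        C₃ * Real.sqrt (hnormSq u) * Real.sqrt (hnormSq v) := by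
  refine ⟨11 / 8, by norm_num, fun u v _ hv0 hu hv => ?_⟩
  set A := √(hnormSq u)
  have hbound := norm_goyB_sq_div_le k₀ (v := v) (norm_le_sqrt_hnormSq hu)
  have hmaj := ((summable_goyMajorant hv).mul_left (11 / 8)).mul_left (A ^ 2)
  have hsum := Summable.of_nonneg_of_le (fun n => by positivity) hbound hmaj
  refine ⟨hsum, ?_⟩
  calc √(∑' n, ‖goyB k₀ u v n‖ ^ 2 / kk k₀ n ^ 2)
      ≤ √(A ^ 2 * (11 / 8 * (11 / 8 * hnormSq v))) := by
        refine Real.sqrt_le_sqrt ((hsum.tsum_le_tsum hbound hmaj).trans ?_)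
        rw [tsum_mul_left, tsum_mul_left]
        gcongr
        exact tsum_goyMajorant_le hv (fun m => sq_nonneg _) (by simp [hv0])
    _ = 11 / 8 * A * √(hnormSq v) := by
        rw [show A ^ 2 * (11 / 8 * (11 / 8 * hnormSq v)) = (11 / 8 * A) ^ 2 * hnormSq v by ring,
          Real.sqrt_mul (sq_nonneg _), Real.sqrt_sq (by positivity)]

/-- `‖B(u,v)‖_{V'} ≤ C₃ |u| |v|` for `u, v ∈ H`. -/
theorem stmt_4 (k₀ : ℝ) (hk₀ : 0 < k₀) :
    ∃ C₃ : ℝ, 0 < C₃ ∧ ∀ u v : ℕ → ℂ, u 0 = 0 → v 0 = 0 → memH u → memH v →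
      Summable (fun n => ‖goyB k₀ u v n‖ ^ 2 / kk k₀ n ^ 2) ∧
      Real.sqrt (∑' n, ‖goyB k₀ u v n‖ ^ 2 / kk k₀ n ^ 2) ≤
        C₃ * Real.sqrt (hnormSq u) * Real.sqrt (hnormSq v) :=
  stmt_4_general k₀
end

section
/- For all u, v ∈ V, setting w = u − v, one has Re ∑ₙ (Bₙ(u, u) − Bₙ(v, v))·w̄ₙ = Re ∑ₙ Bₙ(w, v)·w̄ₙ, i.e. (B(u, u) − B(v, v), w) = (B(w, v), w). -/
open Complex MeasureTheory Filter Topology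

/-! By bilinearity `B(u, u) - B(v, v) = B(w, v) + B(u, w)`, so it suffices that `(B(u, w), w) = 0`;
this holds even before taking real parts. Since `kₙ₊₁ = 2kₙ`, each of the four terms of
`Bₙ(u, w) w̄ₙ` is, up to sign, one of the two triads `i kₙ ūₙ₊₂ w̄ₙ₊₁ w̄ₙ`, `i kₙ ūₙ₊₁ w̄ₙ₊₂ w̄ₙ`
evaluated at `n` or at a shifted index, so the series telescopes. The triad series converge
absolutely because `(kₙ ūₙ₊ᵢ)` and `(w̄ₙ)` are square summable and `(w̄ₙ₊ⱼ)` is bounded. -/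

open ComplexConjugate

theorem summable_mul_mul_of_norm_sq {ι R : Type*} [NormedRing R] [CompleteSpace R]
    {x y z : ι → R} (hx : Summable fun i => ‖x i‖ ^ 2)
    (hy : BddAbove (Set.range fun i => ‖y i‖)) (hz : Summable fun i => ‖z i‖ ^ 2) :
    Summable fun i => x i * y i * z i := by
  obtain ⟨M, hM⟩ := hy
  refine Summable.of_norm_bounded ((hx.add hz).mul_left (M / 2)) fun i => ?_
  have hyM : ‖y i‖ ≤ M := hM ⟨i, rfl⟩
  have hxz := two_mul_le_add_sq ‖x i‖ ‖z i‖
  calc ‖x i * y i * z i‖ ≤ ‖x i‖ * ‖y i‖ * ‖z i‖ := norm_mul₃_le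
    _ ≤ ‖x i‖ * M * ‖z i‖ := by gcongr
    _ ≤ M / 2 * (‖x i‖ ^ 2 + ‖z i‖ ^ 2) := by
      nlinarith [mul_nonneg (norm_nonneg (x i)) (norm_nonneg (z i)), (norm_nonneg (y i)).trans hyM]

theorem hasSum_comp_tsub_iff {α : Type*} [AddCommMonoid α] [TopologicalSpace α] {f : ℕ → α}
    (hf : f 0 = 0) (k : ℕ) {a : α} : HasSum (fun n => f (n - k)) a ↔ HasSum f a := by
  have hsupp : ∀ n ∉ Set.range (· + k), f (n - k) = 0 := by
    intro n hn
    have hnk : n < k := by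
      by_contra! h
      exact hn ⟨n - k, Nat.sub_add_cancel h⟩
    rw [Nat.sub_eq_zero_of_le hnk.le, hf]
  rw [← (add_left_injective k).hasSum_iff hsupp]
  simp [Function.comp_def]

theorem tsum_add_eq_of_hasSum_zero {α β : Type*} [AddCommGroup α] [TopologicalSpace α]
    [IsTopologicalAddGroup α] [T2Space α] {f g : β → α} (hg : HasSum g 0) :
    ∑' i, (f i + g i) = ∑' i, f i := by
  by_cases hf : Summable f
  · simpa using (hf.hasSum.add hg).tsum_eq
  · have hfg : ¬Summable fun i => f i + g i := fun hfg => hf (by simpa using hfg.sub hg.summable)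
    rw [tsum_eq_zero_of_not_summable hf, tsum_eq_zero_of_not_summable hfg]

theorem kk_sq_le_kk_add_sq (k₀ : ℝ) (n i : ℕ) : kk k₀ n ^ 2 ≤ kk k₀ (n + i) ^ 2 := by
  unfold kk
  rw [mul_pow, mul_pow]
  gcongr
  exacts [one_le_two, Nat.le_add_right n i]

theorem memH_of_memV {k₀ : ℝ} (hk₀ : k₀ ≠ 0) {u : ℕ → ℂ} (hu : memV k₀ u) : memH u := by
  refine Summable.of_nonneg_of_le (fun n => by positivity) (fun n => ?_) (hu.mul_left (k₀ ^ 2)⁻¹)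
  have h4 : (1 : ℝ) ≤ (2 ^ n) ^ 2 := one_le_pow₀ (one_le_pow₀ one_le_two)
  have hk : (k₀ ^ 2)⁻¹ * kk k₀ n ^ 2 = (2 ^ n) ^ 2 := by
    unfold kk; field_simp
  rw [← mul_assoc, hk]
  nlinarith [norm_nonneg (u n)]

theorem memH.sub {u v : ℕ → ℂ} (hu : memH u) (hv : memH v) : memH (u - v) := by
  refine Summable.of_nonneg_of_le (fun n => by positivity) (fun n => ?_) ((hu.add hv).mul_left 2)
  calc ‖(u - v) n‖ ^ 2 ≤ (‖u n‖ + ‖v n‖) ^ 2 := by gcongr; exact norm_sub_le _ _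
    _ ≤ 2 * (‖u n‖ ^ 2 + ‖v n‖ ^ 2) := add_sq_le

theorem memH.bddAbove_norm {u : ℕ → ℂ} (hu : memH u) : BddAbove (Set.range fun n => ‖u n‖) := by
  refine ⟨1 + ∑' n, ‖u n‖ ^ 2, Set.forall_mem_range.2 fun n => ?_⟩
  have := hu.le_tsum n fun m _ => by positivity
  nlinarith [sq_nonneg (‖u n‖ - 1)]

def goyTriad (k₀ : ℝ) (u w : ℕ → ℂ) (i j n : ℕ) : ℂ :=
  I * kk k₀ n * conj (u (n + i)) * conj (w (n + j)) * conj (w n)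

theorem goyTriad_zero {k₀ : ℝ} (u : ℕ → ℂ) {w : ℕ → ℂ} (hw0 : w 0 = 0) (i j : ℕ) :
    goyTriad k₀ u w i j 0 = 0 := by
  simp [goyTriad, hw0]

theorem summable_goyTriad {k₀ : ℝ} {u w : ℕ → ℂ} (hu : memV k₀ u) (hw : memH w) (i j : ℕ) :
    Summable (goyTriad k₀ u w i j) := by
  have hx : Summable fun n => ‖I * kk k₀ n * conj (u (n + i))‖ ^ 2 := by
    refine Summable.of_nonneg_of_le (fun n => by positivity) (fun n => ?_)
      ((summable_nat_add_iff i).2 hu)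
    simp only [norm_mul, norm_I, Complex.norm_real, Real.norm_eq_abs, RCLike.norm_conj, one_mul,
      mul_pow, sq_abs]
    exact mul_le_mul_of_nonneg_right (kk_sq_le_kk_add_sq k₀ n i) (by positivity)
  have hy : BddAbove (Set.range fun n => ‖conj (w (n + j))‖) := by
    simp only [RCLike.norm_conj]
    exact hw.bddAbove_norm.mono (Set.range_comp_subset_range (· + j) fun n => ‖w n‖)
  have hz : Summable fun n => ‖conj (w n)‖ ^ 2 := by
    simp only [RCLike.norm_conj]
    exact hw
  exact summable_mul_mul_of_norm_sq hx hy hz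

-- The truncated `n - 1`, `n - 2` hit `0` for small `n`, where the triads vanish since `w 0 = 0`.
theorem goyB_mul_conj_eq {k₀ : ℝ} (u : ℕ → ℂ) {w : ℕ → ℂ} (hw0 : w 0 = 0) (n : ℕ) :
    goyB k₀ u w n * conj (w n) =
      (goyTriad k₀ u w 2 1 (n - 1) - goyTriad k₀ u w 2 1 n) / 2
        + (goyTriad k₀ u w 1 2 (n - 2) - goyTriad k₀ u w 1 2 n) / 2 := by
  rcases n with _ | _ | m
  · simp [goyB]
  · simp only [goyB, goyTriad, if_neg (Nat.succ_ne_zero _), Nat.sub_self, hw0, map_zero]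
    ring
  · simp only [goyB, goyTriad, kk, if_neg (Nat.succ_ne_zero _), Nat.add_sub_cancel]
    push_cast
    ring

theorem hasSum_goyB_mul_conj_self {k₀ : ℝ} {u w : ℕ → ℂ} (hu : memV k₀ u) (hw : memH w)
    (hw0 : w 0 = 0) : HasSum (fun n => goyB k₀ u w n * conj (w n)) 0 := by
  have telescope (i j k : ℕ) :
      HasSum (fun n => goyTriad k₀ u w i j (n - k) - goyTriad k₀ u w i j n) 0 := by
    have h := (summable_goyTriad hu hw i j).hasSum
    simpa using ((hasSum_comp_tsub_iff (goyTriad_zero u hw0 i j) k).2 h).sub h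
  simpa [goyB_mul_conj_eq u hw0] using
    ((telescope 2 1 1).div_const 2).add ((telescope 1 2 2).div_const 2)

theorem goyB_self_sub_goyB_self (k₀ : ℝ) (u v : ℕ → ℂ) (n : ℕ) :
    goyB k₀ u u n - goyB k₀ v v n = goyB k₀ (u - v) v n + goyB k₀ u (u - v) n := by
  rcases n with _ | m
  · simp [goyB]
  · simp only [goyB, Nat.succ_ne_zero, if_false, Pi.sub_apply, map_sub]
    ring

/-- For `u, v ∈ V` and `w = u − v`,
`(B(u,u) − B(v,v), w) = (B(w,v), w)` in the real inner product of `H`. -/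
theorem stmt_8 (k₀ : ℝ) (hk₀ : 0 < k₀) (u v : ℕ → ℂ) (hu0 : u 0 = 0)
    (hv0 : v 0 = 0) (hu : memV k₀ u) (hv : memV k₀ v) :
    (∑' n, (goyB k₀ u u n - goyB k₀ v v n) * (starRingEnd ℂ) ((u - v) n)).re =
      (∑' n, goyB k₀ (u - v) v n * (starRingEnd ℂ) ((u - v) n)).re := by
  have hw : memH (u - v) := (memH_of_memV hk₀.ne' hu).sub (memH_of_memV hk₀.ne' hv)
  have hw0 : (u - v) 0 = 0 := by simp [hu0, hv0]
  simp_rw [goyB_self_sub_goyB_self, add_mul]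
  rw [tsum_add_eq_of_hasSum_zero (hasSum_goyB_mul_conj_self hu hw hw0)]
end

section
/- There exists a constant C > 0 such that for all v, w ∈ V with ‖v‖_{ℓ⁴} < ∞ and ‖w‖_{ℓ⁴} < ∞, the series ∑ₙ Bₙ(w, v)·w̄ₙ converges absolutely and |∑ₙ Bₙ(w, v)·w̄ₙ| ≤ C · ‖v‖_{ℓ⁴} · ‖w‖_{ℓ⁴} · ‖w‖. -/
open Complex MeasureTheory Filter Topology

open Finset in
lemma tsum_CS (f g : ℕ → ℝ) (hf0 : ∀ n, 0 ≤ f n) (hg0 : ∀ n, 0 ≤ g n)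
    (hf : Summable (fun n => f n ^ 2)) (hg : Summable (fun n => g n ^ 2)) :
    Summable (fun n => f n * g n) ∧
    ∑' n, f n * g n ≤ Real.sqrt (∑' n, f n ^ 2) * Real.sqrt (∑' n, g n ^ 2) := by
  have hsum : Summable (fun n => f n * g n) := by
    apply Summable.of_nonneg_of_le (fun n => mul_nonneg (hf0 n) (hg0 n))
      (fun n => ?_) ((hf.add hg).div_const 2)
    nlinarith [sq_nonneg (f n - g n)]
  refine ⟨hsum, Summable.tsum_le_of_sum_le hsum fun s => ?_⟩
  have h1 : (∑ i ∈ s, f i * g i) ^ 2 ≤ (∑ i ∈ s, f i ^ 2) * (∑ i ∈ s, g i ^ 2) :=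
    Finset.sum_mul_sq_le_sq_mul_sq s f g
  have h2 : (∑ i ∈ s, f i ^ 2) ≤ ∑' n, f n ^ 2 := Summable.sum_le_tsum s (fun n _ => sq_nonneg _) hf
  have h3 : (∑ i ∈ s, g i ^ 2) ≤ ∑' n, g n ^ 2 := Summable.sum_le_tsum s (fun n _ => sq_nonneg _) hg
  have h0 : 0 ≤ ∑ i ∈ s, f i * g i := Finset.sum_nonneg fun i _ => mul_nonneg (hf0 i) (hg0 i)
  rw [← Real.sqrt_mul (tsum_nonneg fun n => sq_nonneg _)]
  rw [Real.le_sqrt h0]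
  calc (∑ i ∈ s, f i * g i) ^ 2 ≤ (∑ i ∈ s, f i ^ 2) * (∑ i ∈ s, g i ^ 2) := h1
    _ ≤ (∑' n, f n ^ 2) * (∑' n, g n ^ 2) := by
        exact mul_le_mul h2 h3 (Finset.sum_nonneg fun i _ => sq_nonneg _)
          (tsum_nonneg fun n => sq_nonneg _)
  exact mul_nonneg (tsum_nonneg fun n => sq_nonneg _) (tsum_nonneg fun n => sq_nonneg _)

lemma holder3 (c a b : ℕ → ℝ) (hc0 : ∀ n, 0 ≤ c n) (ha0 : ∀ n, 0 ≤ a n) (hb0 : ∀ n, 0 ≤ b n)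
    (hc : Summable (fun n => c n ^ 2)) (ha : Summable (fun n => a n ^ 4))
    (hb : Summable (fun n => b n ^ 4)) :
    Summable (fun n => c n * (a n * b n)) ∧
    ∑' n, c n * (a n * b n) ≤ Real.sqrt (∑' n, c n ^ 2) *
      ((∑' n, a n ^ 4) ^ ((1:ℝ)/4) * (∑' n, b n ^ 4) ^ ((1:ℝ)/4)) := by
  have ha2 : Summable (fun n => (a n ^ 2) ^ 2) := by simpa [← pow_mul] using ha
  have hb2 : Summable (fun n => (b n ^ 2) ^ 2) := by simpa [← pow_mul] using hb
  have hab := tsum_CS (fun n => a n ^ 2) (fun n => b n ^ 2)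
    (fun n => sq_nonneg _) (fun n => sq_nonneg _) ha2 hb2
  have hp2 : Summable (fun n => (a n * b n) ^ 2) := by
    simpa [mul_pow] using hab.1
  have hmain := tsum_CS c (fun n => a n * b n) hc0
    (fun n => mul_nonneg (ha0 n) (hb0 n)) hc hp2
  refine ⟨hmain.1, hmain.2.trans ?_⟩
  gcongr
  show Real.sqrt (∑' n, (a n * b n) ^ 2) ≤ _
  calc Real.sqrt (∑' n, (a n * b n) ^ 2)
      ≤ Real.sqrt (Real.sqrt (∑' n, (a n ^ 2) ^ 2) * Real.sqrt (∑' n, (b n ^ 2) ^ 2)) := by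
        apply Real.sqrt_le_sqrt
        simpa [mul_pow] using hab.2
    _ = (∑' n, a n ^ 4) ^ ((1:ℝ)/4) * (∑' n, b n ^ 4) ^ ((1:ℝ)/4) := by
        rw [Real.sqrt_mul (Real.sqrt_nonneg _)]
        have h4 : ∀ f : ℕ → ℝ, (fun n => (f n ^ 2) ^ 2) = fun n => f n ^ 4 := by
          intro f; funext n; ring
        rw [h4 a, h4 b]
        have e : ∀ x : ℝ, 0 ≤ x → Real.sqrt (Real.sqrt x) = x ^ ((1:ℝ)/4) := by
          intro x hx
          rw [Real.sqrt_eq_rpow, Real.sqrt_eq_rpow, ← Real.rpow_mul hx]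
          norm_num
        rw [e _ (tsum_nonneg fun n => by positivity), e _ (tsum_nonneg fun n => by positivity)]

lemma shift_up (f : ℕ → ℝ) (hf0 : ∀ n, 0 ≤ f n) (hf : Summable f) (k : ℕ) :
    Summable (fun n => f (n + k)) ∧ ∑' n, f (n + k) ≤ ∑' n, f n := by
  have hs : Summable (fun n => f (n + k)) := (summable_nat_add_iff k).mpr hf
  refine ⟨hs, ?_⟩
  have := Summable.sum_add_tsum_nat_add k hf
  have h0 : 0 ≤ ∑ i ∈ Finset.range k, f i := Finset.sum_nonneg fun i _ => hf0 i
  linarith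

lemma shift_down (f : ℕ → ℝ) (h0 : f 0 = 0) (hf : Summable f) (k : ℕ) :
    Summable (fun n => f (n - k)) ∧ ∑' n, f (n - k) ≤ ∑' n, f n := by
  have he : ∀ n, (fun n => f (n - k)) (n + k) = f n := by
    intro n; simp
  have hs : Summable (fun n => f (n - k)) := by
    rw [← summable_nat_add_iff k]
    simpa only [he] using hf
  refine ⟨hs, ?_⟩
  have key := Summable.sum_add_tsum_nat_add k hs
  have hz : ∑ i ∈ Finset.range k, f (i - k) = 0 := by
    apply Finset.sum_eq_zero; intro i hi
    have : i - k = 0 := Nat.sub_eq_zero_of_le (le_of_lt (Finset.mem_range.mp hi))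
    rw [this, h0]
  rw [hz, zero_add] at key
  rw [← key]
  exact le_of_eq (tsum_congr he)

set_option maxHeartbeats 1000000 in
/-- `|∑ₙ Bₙ(w,v)·w̄ₙ| ≤ C ‖v‖_{ℓ⁴} ‖w‖_{ℓ⁴} ‖w‖`, the series
converging absolutely. -/
theorem stmt_9 (k₀ : ℝ) (hk₀ : 0 < k₀) :
    ∃ C : ℝ, 0 < C ∧ ∀ v w : ℕ → ℂ, v 0 = 0 → w 0 = 0 → memV k₀ v → memV k₀ w →
      Summable (fun n => ‖v n‖ ^ 4) → Summable (fun n => ‖w n‖ ^ 4) →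
      Summable (fun n => ‖goyB k₀ w v n * (starRingEnd ℂ) (w n)‖) ∧
      ‖∑' n, goyB k₀ w v n * (starRingEnd ℂ) (w n)‖ ≤
        C * (∑' n, ‖v n‖ ^ 4) ^ ((1 : ℝ) / 4) * (∑' n, ‖w n‖ ^ 4) ^ ((1 : ℝ) / 4) *
          Real.sqrt (vnormSq k₀ w) := by
  refine ⟨2, by norm_num, fun v w hv0 hw0 hVv hVw hv4 hw4 => ?_⟩
  -- notation
  set a : ℕ → ℝ := fun n => ‖v n‖ with ha_def
  set b : ℕ → ℝ := fun n => ‖w n‖ with hb_def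
  set c : ℕ → ℝ := fun n => kk k₀ n * ‖w n‖ with hc_def
  have hkpos : ∀ n, 0 < kk k₀ n := fun n => by
    unfold kk; positivity
  have ha0 : ∀ n, 0 ≤ a n := fun n => norm_nonneg _
  have hb0 : ∀ n, 0 ≤ b n := fun n => norm_nonneg _
  have hc0 : ∀ n, 0 ≤ c n := fun n => mul_nonneg (hkpos n).le (norm_nonneg _)
  have hc2 : Summable (fun n => c n ^ 2) := by
    have : (fun n => c n ^ 2) = fun n => kk k₀ n ^ 2 * ‖w n‖ ^ 2 := by
      funext n; simp [hc_def, mul_pow]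
    rw [this]; exact hVw
  have hc2sum : ∑' n, c n ^ 2 = vnormSq k₀ w := by
    unfold vnormSq; apply tsum_congr; intro n; simp [hc_def, mul_pow]
  have ha0' : a 0 = 0 := by simp [ha_def, hv0]
  have hb0' : b 0 = 0 := by simp [hb_def, hw0]
  have ha04 : (fun n => a n ^ 4) 0 = 0 := by simp [ha0']
  have hb04 : (fun n => b n ^ 4) 0 = 0 := by simp [hb0']
  -- shifted fourth power data
  have hA1 := shift_down (fun n => a n ^ 4) ha04 hv4 1   -- a (n-1)
  have hA2 := shift_down (fun n => a n ^ 4) ha04 hv4 2   -- a (n-2)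
  have hA3 := shift_up (fun n => a n ^ 4) (fun n => by positivity) hv4 1  -- a (n+1)
  have hA4 := shift_up (fun n => a n ^ 4) (fun n => by positivity) hv4 2  -- a (n+2)
  have hB1 := shift_down (fun n => b n ^ 4) hb04 hw4 1   -- b (n-1)
  have hB3 := shift_up (fun n => b n ^ 4) (fun n => by positivity) hw4 1  -- b (n+1)
  have hB4 := shift_up (fun n => b n ^ 4) (fun n => by positivity) hw4 2  -- b (n+2)
  -- the four Hölder estimates
  have H1 := holder3 c (fun n => a (n - 1)) (fun n => b (n + 1)) hc0 (fun n => ha0 _)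
    (fun n => hb0 _) hc2 hA1.1 hB3.1
  have H2 := holder3 c (fun n => a (n + 2)) (fun n => b (n + 1)) hc0 (fun n => ha0 _)
    (fun n => hb0 _) hc2 hA4.1 hB3.1
  have H3 := holder3 c (fun n => a (n + 1)) (fun n => b (n + 2)) hc0 (fun n => ha0 _)
    (fun n => hb0 _) hc2 hA3.1 hB4.1
  have H4 := holder3 c (fun n => a (n - 2)) (fun n => b (n - 1)) hc0 (fun n => ha0 _)
    (fun n => hb0 _) hc2 hA2.1 hB1.1
  set F1 : ℕ → ℝ := fun n => c n * (a (n - 1) * b (n + 1)) with hF1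
  set F2 : ℕ → ℝ := fun n => c n * (a (n + 2) * b (n + 1)) with hF2
  set F3 : ℕ → ℝ := fun n => c n * (a (n + 1) * b (n + 2)) with hF3
  set F4 : ℕ → ℝ := fun n => c n * (a (n - 2) * b (n - 1)) with hF4
  set K : ℝ := Real.sqrt (∑' n, c n ^ 2) with hK
  set A : ℝ := (∑' n, a n ^ 4) ^ ((1:ℝ)/4) with hA
  set B : ℝ := (∑' n, b n ^ 4) ^ ((1:ℝ)/4) with hB
  have hK0 : 0 ≤ K := Real.sqrt_nonneg _
  have hA0 : 0 ≤ A := Real.rpow_nonneg (tsum_nonneg fun n => by positivity) _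
  have hB0 : 0 ≤ B := Real.rpow_nonneg (tsum_nonneg fun n => by positivity) _
  -- bounds for shifted ℓ⁴ quantities
  have rpow_mono : ∀ x y : ℝ, 0 ≤ x → x ≤ y → x ^ ((1:ℝ)/4) ≤ y ^ ((1:ℝ)/4) :=
    fun x y hx hxy => Real.rpow_le_rpow hx hxy (by norm_num)
  -- key pointwise bound
  have key : ∀ n, ‖goyB k₀ w v n * (starRingEnd ℂ) (w n)‖ ≤
      (1/4) * F1 n + (1/2) * F2 n + (1/2) * F3 n + (1/8) * F4 n := by
    intro n
    have hFn : ∀ i j k : ℕ, 0 ≤ c i * (a j * b k) :=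
      fun i j k => mul_nonneg (hc0 i) (mul_nonneg (ha0 j) (hb0 k))
    rcases eq_or_ne n 0 with rfl | hn
    · have hz : goyB k₀ w v 0 = 0 := by simp [goyB]
      rw [hz, zero_mul, norm_zero]
      simp only [hF1, hF2, hF3, hF4]
      linarith [hFn 0 (0-1) (0+1), hFn 0 (0+2) (0+1), hFn 0 (0+1) (0+2), hFn 0 (0-2) (0-1)]
    · set X : ℂ := ((1 / 4) * (starRingEnd ℂ) (w (n + 1)) * (starRingEnd ℂ) (v (n - 1))
        - (1 / 2) * ((starRingEnd ℂ) (w (n + 1)) * (starRingEnd ℂ) (v (n + 2))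
            + (starRingEnd ℂ) (w (n + 2)) * (starRingEnd ℂ) (v (n + 1)))
        + (1 / 8) * (starRingEnd ℂ) (w (n - 1)) * (starRingEnd ℂ) (v (n - 2))) with hX
      have hgoy : goyB k₀ w v n = Complex.I * (kk k₀ n : ℂ) * X := by
        simp only [goyB, if_neg hn, hX]
      have hnorm : ‖goyB k₀ w v n * (starRingEnd ℂ) (w n)‖ = kk k₀ n * ‖X‖ * b n := by
        rw [hgoy]
        simp only [norm_mul, Complex.norm_I, one_mul, RCLike.norm_conj]
        rw [Complex.norm_real]
        rw [Real.norm_eq_abs, abs_of_pos (hkpos n)]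
      have hXle : ‖X‖ ≤ (1/4) * (b (n+1) * a (n-1)) + (1/2) * (b (n+1) * a (n+2))
          + (1/2) * (b (n+2) * a (n+1)) + (1/8) * (b (n-1) * a (n-2)) := by
        rw [hX]
        have t1 : ‖(1 / 4 : ℂ) * (starRingEnd ℂ) (w (n + 1)) * (starRingEnd ℂ) (v (n - 1))‖
            = (1/4) * (b (n+1) * a (n-1)) := by
          simp only [norm_mul, RCLike.norm_conj]
          norm_num [ha_def, hb_def]; ring
        have t2 : ‖(1 / 2 : ℂ) * ((starRingEnd ℂ) (w (n + 1)) * (starRingEnd ℂ) (v (n + 2))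
            + (starRingEnd ℂ) (w (n + 2)) * (starRingEnd ℂ) (v (n + 1)))‖
            ≤ (1/2) * (b (n+1) * a (n+2)) + (1/2) * (b (n+2) * a (n+1)) := by
          rw [norm_mul]
          have := norm_add_le ((starRingEnd ℂ) (w (n + 1)) * (starRingEnd ℂ) (v (n + 2)))
            ((starRingEnd ℂ) (w (n + 2)) * (starRingEnd ℂ) (v (n + 1)))
          simp only [norm_mul, RCLike.norm_conj] at this ⊢
          have h12 : ‖(1 / 2 : ℂ)‖ = 1/2 := by norm_num
          rw [h12]
          nlinarith [norm_nonneg (w (n+1)), norm_nonneg (v (n+2)), norm_nonneg (w (n+2)),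
            norm_nonneg (v (n+1))]
        have t3 : ‖(1 / 8 : ℂ) * (starRingEnd ℂ) (w (n - 1)) * (starRingEnd ℂ) (v (n - 2))‖
            = (1/8) * (b (n-1) * a (n-2)) := by
          simp only [norm_mul, RCLike.norm_conj]
          norm_num [ha_def, hb_def]; ring
        calc ‖_ - _ + _‖ ≤ ‖(1 / 4 : ℂ) * (starRingEnd ℂ) (w (n + 1)) * (starRingEnd ℂ) (v (n - 1))
              - (1 / 2 : ℂ) * ((starRingEnd ℂ) (w (n + 1)) * (starRingEnd ℂ) (v (n + 2))
                + (starRingEnd ℂ) (w (n + 2)) * (starRingEnd ℂ) (v (n + 1)))‖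
              + ‖(1 / 8 : ℂ) * (starRingEnd ℂ) (w (n - 1)) * (starRingEnd ℂ) (v (n - 2))‖ :=
            norm_add_le _ _
          _ ≤ ‖(1 / 4 : ℂ) * (starRingEnd ℂ) (w (n + 1)) * (starRingEnd ℂ) (v (n - 1))‖
              + ‖(1 / 2 : ℂ) * ((starRingEnd ℂ) (w (n + 1)) * (starRingEnd ℂ) (v (n + 2))
                + (starRingEnd ℂ) (w (n + 2)) * (starRingEnd ℂ) (v (n + 1)))‖
              + ‖(1 / 8 : ℂ) * (starRingEnd ℂ) (w (n - 1)) * (starRingEnd ℂ) (v (n - 2))‖ := by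
            gcongr; exact norm_sub_le _ _
          _ ≤ _ := by rw [t1, t3]; linarith
      calc ‖goyB k₀ w v n * (starRingEnd ℂ) (w n)‖ = kk k₀ n * ‖X‖ * b n := hnorm
        _ ≤ kk k₀ n * ((1/4) * (b (n+1) * a (n-1)) + (1/2) * (b (n+1) * a (n+2))
            + (1/2) * (b (n+2) * a (n+1)) + (1/8) * (b (n-1) * a (n-2))) * b n := by
          gcongr
          exact (hkpos n).le
        _ = (1/4) * F1 n + (1/2) * F2 n + (1/2) * F3 n + (1/8) * F4 n := by
          simp only [hF1, hF2, hF3, hF4, hc_def, hb_def]; ring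
  -- summability of the dominating series
  have hSsum : Summable (fun n => (1/4) * F1 n + (1/2) * F2 n + (1/2) * F3 n + (1/8) * F4 n) :=
    (((H1.1.mul_left _).add (H2.1.mul_left _)).add (H3.1.mul_left _)).add (H4.1.mul_left _)
  have hsum : Summable (fun n => ‖goyB k₀ w v n * (starRingEnd ℂ) (w n)‖) :=
    Summable.of_nonneg_of_le (fun n => norm_nonneg _) key hSsum
  refine ⟨hsum, ?_⟩
  -- shifted ℓ⁴ bounds in rpow form
  have bA1 : (∑' n, a (n-1) ^ 4) ^ ((1:ℝ)/4) ≤ A :=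
    rpow_mono _ _ (tsum_nonneg fun n => by positivity) hA1.2
  have bA2 : (∑' n, a (n-2) ^ 4) ^ ((1:ℝ)/4) ≤ A :=
    rpow_mono _ _ (tsum_nonneg fun n => by positivity) hA2.2
  have bA3 : (∑' n, a (n+1) ^ 4) ^ ((1:ℝ)/4) ≤ A :=
    rpow_mono _ _ (tsum_nonneg fun n => by positivity) hA3.2
  have bA4 : (∑' n, a (n+2) ^ 4) ^ ((1:ℝ)/4) ≤ A :=
    rpow_mono _ _ (tsum_nonneg fun n => by positivity) hA4.2
  have bB1 : (∑' n, b (n-1) ^ 4) ^ ((1:ℝ)/4) ≤ B :=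
    rpow_mono _ _ (tsum_nonneg fun n => by positivity) hB1.2
  have bB3 : (∑' n, b (n+1) ^ 4) ^ ((1:ℝ)/4) ≤ B :=
    rpow_mono _ _ (tsum_nonneg fun n => by positivity) hB3.2
  have bB4 : (∑' n, b (n+2) ^ 4) ^ ((1:ℝ)/4) ≤ B :=
    rpow_mono _ _ (tsum_nonneg fun n => by positivity) hB4.2
  have hprod : ∀ x y : ℝ, x ≤ A → y ≤ B → 0 ≤ x → 0 ≤ y → K * (x * y) ≤ K * (A * B) :=
    fun x y hx hy hx0 hy0 =>
      mul_le_mul_of_nonneg_left (mul_le_mul hx hy hy0 hA0) hK0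
  have rpnn : ∀ f : ℕ → ℝ, 0 ≤ (∑' n, f n ^ 4 : ℝ) ^ ((1:ℝ)/4) := fun f =>
    Real.rpow_nonneg (tsum_nonneg fun n => by positivity) _
  have e1 : ∑' n, F1 n ≤ K * (A * B) :=
    H1.2.trans (hprod _ _ bA1 bB3 (rpnn _) (rpnn _))
  have e2 : ∑' n, F2 n ≤ K * (A * B) :=
    H2.2.trans (hprod _ _ bA4 bB3 (rpnn _) (rpnn _))
  have e3 : ∑' n, F3 n ≤ K * (A * B) :=
    H3.2.trans (hprod _ _ bA3 bB4 (rpnn _) (rpnn _))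
  have e4 : ∑' n, F4 n ≤ K * (A * B) :=
    H4.2.trans (hprod _ _ bA2 bB1 (rpnn _) (rpnn _))
  have hF1nn : ∀ n, (0:ℝ) ≤ F1 n := fun n => mul_nonneg (hc0 n) (mul_nonneg (ha0 _) (hb0 _))
  calc ‖∑' n, goyB k₀ w v n * (starRingEnd ℂ) (w n)‖
      ≤ ∑' n, ‖goyB k₀ w v n * (starRingEnd ℂ) (w n)‖ := norm_tsum_le_tsum_norm hsum
    _ ≤ ∑' n, ((1/4) * F1 n + (1/2) * F2 n + (1/2) * F3 n + (1/8) * F4 n) :=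
        Summable.tsum_le_tsum key hsum hSsum
    _ = (1/4) * ∑' n, F1 n + (1/2) * ∑' n, F2 n + (1/2) * ∑' n, F3 n + (1/8) * ∑' n, F4 n := by
        rw [Summable.tsum_add ((H1.1.mul_left _).add (H2.1.mul_left _) |>.add (H3.1.mul_left _))
          (H4.1.mul_left _),
          Summable.tsum_add ((H1.1.mul_left _).add (H2.1.mul_left _)) (H3.1.mul_left _),
          Summable.tsum_add (H1.1.mul_left _) (H2.1.mul_left _),
          tsum_mul_left, tsum_mul_left, tsum_mul_left, tsum_mul_left]
    _ ≤ (1/4) * (K * (A * B)) + (1/2) * (K * (A * B)) + (1/2) * (K * (A * B))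
        + (1/8) * (K * (A * B)) := by gcongr
    _ ≤ 2 * A * B * K := by nlinarith [mul_nonneg hA0 hB0, mul_nonneg (mul_nonneg hA0 hB0) hK0]
    _ = 2 * (∑' n, ‖v n‖ ^ 4) ^ ((1:ℝ)/4) * (∑' n, ‖w n‖ ^ 4) ^ ((1:ℝ)/4)
        * Real.sqrt (vnormSq k₀ w) := by rw [hA, hB, hK, hc2sum]
end
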